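/- The random series I^{(g)} := ∑_{k=0}^∞ g(S_k) E_{k+1} is almost surely finite if and only if the series ∑_{k=1}^∞ g(k) converges. -/

import Mathlib

/-!
By the strong law of large numbers, almost surely `S_k / k → E[Z_1] > 0` and the Cesàro means
of `(E_k)` tend to `1/λ > 0`. For such a sample path, `g(S_k)` is squeezed between `g(C k)` and
`g(c k)` for large `k`, and Abel summation shows that, against an antitone nonnegative sequence
`a`, weights with Cesàro means converging to a positive limit do not affect summability:
`∑ a_k E_k < ∞ ↔ ∑ a_k < ∞`. Finally, for antitone `g` the summability of `g(c k)` does not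
depend on `c > 0`, since `g(d k) ≤ g(c ⌊k / N⌋)` once `c ≤ d N`.
-/

open MeasureTheory ProbabilityTheory Filter Topology Finset

lemma Antitone.neg_mul_le_sum_range_mul {a d : ℕ → ℝ} {K : ℝ} (ha : Antitone a)
    (ha0 : ∀ k, 0 ≤ a k) (hd : ∀ n, -K ≤ ∑ k ∈ range n, d k) (n : ℕ) :
    -(K * a 0) ≤ ∑ k ∈ range n, a k * d k := by
  have hby_parts : ∀ n, a n * (∑ k ∈ range n, d k + K) ≤ ∑ k ∈ range n, a k * d k + K * a 0 := by
    intro n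
    induction n with
    | zero => simp [mul_comm]
    | succ n ih =>
      have hanti : a (n + 1) * (∑ k ∈ range (n + 1), d k + K)
          ≤ a n * (∑ k ∈ range (n + 1), d k + K) :=
        mul_le_mul_of_nonneg_right (ha n.le_succ) (by linarith [hd (n + 1)])
      rw [sum_range_succ, sum_range_succ] at *
      linarith
  linarith [hby_parts n, mul_nonneg (ha0 n) (show 0 ≤ ∑ k ∈ range n, d k + K by linarith [hd n])]

lemma eventually_mul_le_of_tendsto_div {s : ℕ → ℝ} {μ c : ℝ}
    (hs : Tendsto (fun k : ℕ => s k / k) atTop (𝓝 μ)) (hc : c < μ) :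
    ∀ᶠ k : ℕ in atTop, c * k ≤ s k := by
  filter_upwards [hs.eventually (eventually_gt_nhds hc), eventually_gt_atTop 0] with k hk hk0
  rw [lt_div_iff₀ (by exact_mod_cast hk0)] at hk
  exact hk.le

lemma eventually_le_mul_of_tendsto_div {s : ℕ → ℝ} {μ C : ℝ}
    (hs : Tendsto (fun k : ℕ => s k / k) atTop (𝓝 μ)) (hC : μ < C) :
    ∀ᶠ k : ℕ in atTop, s k ≤ C * k := by
  filter_upwards [hs.eventually (eventually_lt_nhds hC), eventually_gt_atTop 0] with k hk hk0
  rw [div_lt_iff₀ (by exact_mod_cast hk0)] at hk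
  exact hk.le

section Cesaro

variable {a e : ℕ → ℝ} {m : ℝ}

lemma exists_sum_range_le_mul_of_tendsto
    (he : Tendsto (fun n : ℕ => (∑ k ∈ range n, e k) / n) atTop (𝓝 m)) :
    ∃ R, ∀ n : ℕ, ∑ k ∈ range n, e k ≤ R * n := by
  obtain ⟨R, hR⟩ := he.bddAbove_range
  refine ⟨R, fun n => ?_⟩
  rcases n.eq_zero_or_pos with rfl | hn
  · simp
  · rw [← div_le_iff₀ (by exact_mod_cast hn)]
    exact hR ⟨n, rfl⟩

lemma exists_mul_sub_le_sum_range_of_tendsto (he0 : ∀ k, 0 ≤ e k)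
    (he : Tendsto (fun n : ℕ => (∑ k ∈ range n, e k) / n) atTop (𝓝 m)) (hm : 0 < m) :
    ∃ ρ > 0, ∃ K, ∀ n : ℕ, ρ * n - K ≤ ∑ k ∈ range n, e k := by
  obtain ⟨M, hM⟩ := eventually_atTop.1 (eventually_mul_le_of_tendsto_div he (half_lt_self hm))
  refine ⟨m / 2, half_pos hm, m / 2 * M, fun n => ?_⟩
  rcases le_or_gt M n with hn | hn
  · have := hM n hn
    nlinarith
  · have : (n : ℝ) < M := by exact_mod_cast hn
    nlinarith [sum_nonneg fun k (_ : k ∈ range n) => he0 k]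

lemma summable_mul_iff_of_tendsto_cesaro (ha : Antitone a) (ha0 : ∀ k, 0 ≤ a k)
    (he0 : ∀ k, 0 ≤ e k)
    (he : Tendsto (fun n : ℕ => (∑ k ∈ range n, e k) / n) atTop (𝓝 m)) (hm : 0 < m) :
    Summable (fun k => a k * e k) ↔ Summable a := by
  constructor
  · intro hae
    obtain ⟨ρ, hρ, K, hK⟩ := exists_mul_sub_le_sum_range_of_tendsto he0 he hm
    refine summable_of_sum_range_le ha0 (c := (∑' k, a k * e k + K * a 0) / ρ) fun n => ?_
    have habel := ha.neg_mul_le_sum_range_mul ha0 (d := fun k => e k - ρ) (K := K)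
      (fun n => by
        simp only [sum_sub_distrib, sum_const, card_range, nsmul_eq_mul]
        linarith [hK n]) n
    have htsum := hae.sum_le_tsum (range n) fun k _ => mul_nonneg (ha0 k) (he0 k)
    simp only [mul_sub, sum_sub_distrib, ← sum_mul] at habel
    rw [le_div_iff₀ hρ]
    linarith
  · intro hsum
    obtain ⟨R, hR⟩ := exists_sum_range_le_mul_of_tendsto he
    refine summable_of_sum_range_le (fun k => mul_nonneg (ha0 k) (he0 k))
      (c := (∑' k, a k) * R) fun n => ?_
    have habel := ha.neg_mul_le_sum_range_mul ha0 (d := fun k => R - e k) (K := 0)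
      (fun n => by simpa [sum_sub_distrib, mul_comm] using hR n) n
    have hR0 : 0 ≤ R := by simpa using (he0 0).trans (by simpa using hR 1)
    have htsum := mul_le_mul_of_nonneg_right
      (hsum.sum_le_tsum (range n) fun k _ => ha0 k) hR0
    simp only [mul_sub, sum_sub_distrib, ← sum_mul] at habel
    linarith

end Cesaro

lemma Summable.comp_div_natCast {h : ℕ → ℝ} (hs : Summable h) (N : ℕ) [NeZero N] :
    Summable fun k => h (k / N) := by
  have hprod : Summable fun p : ℕ × Fin N => ‖h p.1‖ * 1 :=
    hs.norm.mul_of_nonneg .of_finite (fun _ => norm_nonneg _) fun _ => zero_le_one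
  refine ((Nat.divModEquiv N).summable_iff.2 (Summable.of_norm (f := fun p : ℕ × Fin N => h p.1)
    (by simpa using hprod))).congr fun k => ?_
  simp [Nat.divModEquiv]

section Antitone

variable {g : ℝ → ℝ} (hg : AntitoneOn g (Set.Ici 0))
include hg

lemma AntitoneOn.antitone_comp_mul_natCast {c : ℝ} (hc : 0 ≤ c) :
    Antitone fun k : ℕ => g (c * k) := fun _ _ hij =>
  hg (Set.mem_Ici.2 (by positivity)) (Set.mem_Ici.2 (by positivity))
    (mul_le_mul_of_nonneg_left (by exact_mod_cast hij) hc)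

lemma AntitoneOn.summable_comp_mul_of_summable (hg0 : ∀ x, 0 ≤ g x) {c d : ℝ} (hc : 0 < c)
    (hd : 0 < d) (h : Summable fun k : ℕ => g (c * k)) : Summable fun k : ℕ => g (d * k) := by
  set N := ⌈c / d⌉₊
  have hN : 0 < N := Nat.ceil_pos.2 (by positivity)
  have : NeZero N := ⟨hN.ne'⟩
  have hcN : c ≤ d * N := by
    have := Nat.le_ceil (c / d)
    rwa [div_le_iff₀ hd, mul_comm] at this
  refine (h.comp_div_natCast N).of_nonneg_of_le (fun _ => hg0 _) fun k =>
    hg (Set.mem_Ici.2 (by positivity)) (Set.mem_Ici.2 (by positivity)) ?_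
  have hdiv : ((k / N : ℕ) : ℝ) * N ≤ k := by exact_mod_cast Nat.div_mul_le_self k N
  have hNpos : (0 : ℝ) < N := by exact_mod_cast hN
  nlinarith [mul_le_mul_of_nonneg_left hcN (Nat.cast_nonneg (α := ℝ) k),
    mul_le_mul_of_nonneg_left hdiv hc.le]

lemma AntitoneOn.summable_comp_mul_iff (hg0 : ∀ x, 0 ≤ g x) {c : ℝ} (hc : 0 < c) :
    (Summable fun k : ℕ => g (c * k)) ↔ Summable fun k : ℕ => g ((k : ℝ) + 1) := by
  refine ⟨fun h => ?_, fun h => hg.summable_comp_mul_of_summable hg0 one_pos hc ?_⟩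
  · exact ((summable_nat_add_iff 1).2 (hg.summable_comp_mul_of_summable hg0 hc one_pos h)).congr
      fun k => by push_cast; ring_nf
  · exact (summable_nat_add_iff 1).1 (h.congr fun k => by push_cast; ring_nf)

end Antitone

section Exponential

variable {r : ℝ}

lemma expMeasure_eq_withDensity (r : ℝ) :
    expMeasure r = volume.withDensity (exponentialPDF r) := rfl

lemma ae_nonneg_expMeasure (r : ℝ) : ∀ᵐ x ∂expMeasure r, 0 ≤ x := by
  simp only [ae_iff, not_le]
  exact (withDensity_apply _ measurableSet_Iio).trans (lintegral_exponentialPDF_of_nonpos le_rfl)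

lemma integrable_id_expMeasure (hr : 0 < r) : Integrable id (expMeasure r) := by
  have hmeas : Measurable (exponentialPDF r) := (measurable_exponentialPDFReal r).ennreal_ofReal
  rw [expMeasure_eq_withDensity, integrable_withDensity_iff_integrable_smul' hmeas
    (ae_of_all _ fun _ => ENNReal.ofReal_lt_top)]
  have h := integrableOn_rpow_mul_exp_neg_mul_rpow (s := 1) (p := 1) (by norm_num) one_pos hr
  rw [← integrableOn_Ici_iff_integrableOn_Ioi, ← integrable_indicator_iff measurableSet_Ici] at h
  refine (h.const_mul r).congr (ae_of_all _ fun x => ?_)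
  rcases lt_or_ge x 0 with hx | hx
  · simp [hx, exponentialPDF_of_neg hx]
  · simp only [Real.rpow_one, neg_mul, Set.mem_Ici, hx, Set.indicator_of_mem,
      exponentialPDF_of_nonneg hx, hr.le, ENNReal.ofReal_mul, ENNReal.toReal_mul,
      ENNReal.toReal_ofReal, Real.exp_nonneg, id_eq, smul_eq_mul]
    ring

lemma integral_id_expMeasure_pos (hr : 0 < r) : 0 < ∫ x, x ∂expMeasure r := by
  have := isProbabilityMeasure_expMeasure hr
  have hsupp : Function.support (fun x : ℝ => x) = {0}ᶜ := by ext; simp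
  have hatom : expMeasure r {0} = 0 :=
    withDensity_absolutelyContinuous _ _ Real.volume_singleton
  rw [integral_pos_iff_support_of_nonneg_ae (ae_nonneg_expMeasure r) (integrable_id_expMeasure hr),
    hsupp, measure_compl (measurableSet_singleton 0) (measure_ne_top _ _), hatom]
  simp

end Exponential

theorem AntitoneOn.summable_comp_mul_iff_of_tendsto {g : ℝ → ℝ} (hg : AntitoneOn g (Set.Ici 0))
    (hg0 : ∀ x, 0 ≤ g x) {s e : ℕ → ℝ} {μ m : ℝ}
    (hs : Tendsto (fun k : ℕ => s k / k) atTop (𝓝 μ)) (hμ : 0 < μ) (he0 : ∀ k, 0 ≤ e k)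
    (he : Tendsto (fun n : ℕ => (∑ k ∈ range n, e k) / n) atTop (𝓝 m)) (hm : 0 < m) :
    (Summable fun k => g (s k) * e k) ↔ Summable fun k : ℕ => g ((k : ℝ) + 1) := by
  have hlinear : ∀ c > 0,
      (Summable fun k : ℕ => g (c * k) * e k) ↔ Summable fun k : ℕ => g ((k : ℝ) + 1) :=
    fun c hc => (summable_mul_iff_of_tendsto_cesaro (hg.antitone_comp_mul_natCast hc.le)
      (fun _ => hg0 _) he0 he hm).trans (hg.summable_comp_mul_iff hg0 hc)
  constructor
  · intro h
    refine (hlinear (2 * μ) (by positivity)).1 (h.of_norm_bounded_eventually_nat ?_)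
    filter_upwards [eventually_mul_le_of_tendsto_div hs hμ,
      eventually_le_mul_of_tendsto_div hs (lt_two_mul_self hμ)] with k hk0 hk
    rw [Real.norm_of_nonneg (mul_nonneg (hg0 _) (he0 k))]
    exact mul_le_mul_of_nonneg_right
      (hg (Set.mem_Ici.2 (by simpa using hk0)) (Set.mem_Ici.2 (by positivity)) hk) (he0 k)
  · intro h
    refine ((hlinear (μ / 2) (half_pos hμ)).2 h).of_norm_bounded_eventually_nat ?_
    filter_upwards [eventually_mul_le_of_tendsto_div hs (half_lt_self hμ)] with k hk
    have hck : 0 ≤ μ / 2 * k := by positivity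
    rw [Real.norm_of_nonneg (mul_nonneg (hg0 _) (he0 k))]
    exact mul_le_mul_of_nonneg_right
      (hg (Set.mem_Ici.2 hck) (Set.mem_Ici.2 (hck.trans hk)) hk) (he0 k)

theorem stmt5_general
    {Ω : Type*} [MeasurableSpace Ω] (P : Measure Ω) [IsProbabilityMeasure P]
    (lam : ℝ) (hlam : 0 < lam)
    (g : ℝ → ℝ) (hgnn : ∀ x, 0 ≤ g x) (hganti : AntitoneOn g (Set.Ici 0))
    (Z : ℕ → Ω → ℝ) (E : ℕ → Ω → ℝ)
    (hZmeas : ∀ i, Measurable (Z i))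
    (hEmeas : ∀ k, Measurable (E k))
    (hZid : ∀ i, Measure.map (Z i) P = Measure.map (Z 0) P)
    (hZint : Integrable (Z 0) P) (hZmean : 0 < ∫ ω, Z 0 ω ∂P)
    (hEexp : ∀ k, Measure.map (E k) P = expMeasure lam)
    (hIndep : iIndepFun (Sum.elim Z E) P)
    (S : ℕ → Ω → ℝ) (hS : ∀ k ω, S k ω = ∑ i ∈ Finset.range k, Z i ω) :
    (∀ᵐ ω ∂P, Summable fun k : ℕ => g (S k ω) * E k ω) ↔
      Summable (fun k : ℕ => g ((k : ℝ) + 1)) := by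
  have hEint : Integrable (E 0) P :=
    (integrable_map_measure aestronglyMeasurable_id (hEmeas 0).aemeasurable).1
      (by rw [hEexp 0]; exact integrable_id_expMeasure hlam)
  have hEmean : 0 < ∫ ω, E 0 ω ∂P := by
    rw [← integral_map (f := fun x : ℝ => x) (hEmeas 0).aemeasurable aestronglyMeasurable_id,
      hEexp 0]
    exact integral_id_expMeasure_pos hlam
  have hEnn : ∀ᵐ ω ∂P, ∀ k, 0 ≤ E k ω := ae_all_iff.2 fun k =>
    ae_of_ae_map (hEmeas k).aemeasurable (by rw [hEexp k]; exact ae_nonneg_expMeasure lam)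
  have hSlln_Z := strong_law_ae_real Z hZint
    (fun i j hij => hIndep.indepFun (Sum.inl_injective.ne hij))
    (fun i => ⟨(hZmeas i).aemeasurable, (hZmeas 0).aemeasurable, hZid i⟩)
  have hSlln_E := strong_law_ae_real E hEint
    (fun i j hij => hIndep.indepFun (Sum.inr_injective.ne hij))
    (fun i => ⟨(hEmeas i).aemeasurable, (hEmeas 0).aemeasurable, by rw [hEexp i, hEexp 0]⟩)
  have hiff : ∀ᵐ ω ∂P, (Summable fun k : ℕ => g (S k ω) * E k ω) ↔
      Summable fun k : ℕ => g ((k : ℝ) + 1) := by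
    filter_upwards [hSlln_Z, hSlln_E, hEnn] with ω hZω hEω hEnnω
    exact hganti.summable_comp_mul_iff_of_tendsto hgnn (by simpa only [hS] using hZω) hZmean
      hEnnω hEω hEmean
  exact (eventually_congr hiff).trans eventually_const

/-- for a decreasing `g : [0,∞) → [0,∞)` with `g(0) > 0`, the random series
`I^{(g)} = ∑ₖ g(S_k) E_{k+1}` is almost surely finite if and only if `∑_{k≥1} g(k)`
converges. -/
theorem stmt5
    {Ω : Type*} [MeasurableSpace Ω] (P : Measure Ω) [IsProbabilityMeasure P]
    (lam : ℝ) (hlam : 0 < lam)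
    (g : ℝ → ℝ) (hgnn : ∀ x, 0 ≤ g x) (hganti : AntitoneOn g (Set.Ici 0))
    (hg0 : 0 < g 0)
    (Z : ℕ → Ω → ℝ) (E : ℕ → Ω → ℝ)
    (hZmeas : ∀ i, Measurable (Z i))
    (hEmeas : ∀ k, Measurable (E k))
    (hZnn : ∀ i, ∀ ω, 0 ≤ Z i ω)
    (hZid : ∀ i, Measure.map (Z i) P = Measure.map (Z 0) P)
    (hZint : Integrable (Z 0) P) (hZmean : 0 < ∫ ω, Z 0 ω ∂P)
    (hEexp : ∀ k, Measure.map (E k) P = expMeasure lam)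
    (hIndep : iIndepFun (Sum.elim Z E) P)
    (S : ℕ → Ω → ℝ) (hS : ∀ k ω, S k ω = ∑ i ∈ Finset.range k, Z i ω) :
    (∀ᵐ ω ∂P, Summable fun k : ℕ => g (S k ω) * E k ω) ↔
      Summable (fun k : ℕ => g ((k : ℝ) + 1)) :=
  stmt5_general P lam hlam g hgnn hganti Z E hZmeas hEmeas hZid hZint hZmean hEexp hIndep S hS
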